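/- Let X be a Markov chain with finite state space S of size n and stationary distribution π, and suppose ψ : ℕ → ℝ is such that P_z(τ(y) = u) ≤ ψ(u) for all states z, y and all integers u > 0. Then for all states x, y and integers t > s > 0, P_x(τ(y) = t) ≤ d_x(s)·ψ(t − s) + 1/(t − s), where d_x(s) is the total variation distance between p^s(x, ·) and π. Moreover, if t > 2·t_mix(1/4)·⌈log₂ n⌉, then P_x(τ(y) = t) ≤ 4/t. -/

import Mathlib

open Finset

/-- A (row-)stochastic transition matrix: the transition kernel of a Markov chain
on the finite state space `S`. -/
def IsStochastic {S : Type*} [Fintype S] (p : Matrix S S ℝ) : Prop :=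
  (∀ a b, 0 ≤ p a b) ∧ ∀ a, ∑ b, p a b = 1

/-- `π` is a stationary distribution for the transition matrix `p`. -/
def IsStationaryDistr {S : Type*} [Fintype S] (p : Matrix S S ℝ) (π : S → ℝ) : Prop :=
  (∀ a, 0 ≤ π a) ∧ (∑ a, π a = 1) ∧ ∀ b, ∑ a, π a * p a b = π b

/-- The chain with transition matrix `p` is reversible with respect to `π`. -/
def IsReversible {S : Type*} [Fintype S] (p : Matrix S S ℝ) (π : S → ℝ) : Prop :=
  ∀ a b, π a * p a b = π b * p b a

/-- The probability weight of a finite trajectory `z 0, z 1, …, z m` of the chain. -/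
noncomputable def pathWeight {S : Type*} (p : Matrix S S ℝ) {m : ℕ} (z : Fin (m + 1) → S) : ℝ :=
  ∏ i : Fin m, p (z i.castSucc) (z i.succ)

open scoped Classical in
/-- `P_x(A)` for an event `A` depending on the trajectory `X_0, X_1, …, X_m`
of the chain started at `x`. -/
noncomputable def eventProb {S : Type*} [Fintype S] (p : Matrix S S ℝ) (x : S) (m : ℕ)
    (A : (Fin (m + 1) → S) → Prop) : ℝ :=
  ∑ z : Fin (m + 1) → S, if z 0 = x ∧ A z then pathWeight p z else 0

/-- `P_x(τ(y) = t)`: the probability that the chain started at `x` first visits `y`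
exactly at time `t`. -/
noncomputable def hitProbEq {S : Type*} [Fintype S] (p : Matrix S S ℝ) (x y : S) (t : ℕ) : ℝ :=
  eventProb p x t fun z => z (Fin.last t) = y ∧ ∀ i : Fin (t + 1), (i : ℕ) < t → z i ≠ y

/-- `d_x(s)`: the total variation distance between `p^s(x, ·)` and `π`. -/
noncomputable def tvDist {S : Type*} [Fintype S] [DecidableEq S]
    (p : Matrix S S ℝ) (π : S → ℝ) (x : S) (s : ℕ) : ℝ :=
  (1 / 2) * ∑ z, |(p ^ s) x z - π z|

/-!
Write `h_u(z) = P_z(τ(y) = u)`. By the Markov property at time `s`,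
`P_x(τ(y) = s + m) ≤ ∑_z p^s(x, z) h_m(z) = ∑_z (p^s(x, z) - π(z)) h_m(z) + ∑_z π(z) h_m(z)`.
The first sum is at most `d_x(s) · sup h_m`. The second is the stationary surprise
`P_π(τ(y) = m)`, which is non-increasing in `m` because `π` is invariant; since the events
`τ(y) = u` are disjoint, `m · P_π(τ(y) = m) ≤ ∑_{u ≤ m} P_π(τ(y) = u) ≤ 1`. The same averaging
from a point mass gives `h_m(z) ≤ n / m`, the bound used for `ψ` in the second claim.
There `s = t_mix(1/4) ⌈log₂ n⌉`, so submultiplicativity of the worst-case distance between rows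
of `p^s` gives `d_x(s) ≤ 2^{-⌈log₂ n⌉} ≤ 1/n`, and `t - s ≥ t / 2`.
-/

open Matrix

lemma sum_posPart_eq_half_sum_abs {ι : Type*} (s : Finset ι) {f : ι → ℝ} (hf : ∑ i ∈ s, f i = 0) :
    ∑ i ∈ s, (f i)⁺ = (∑ i ∈ s, |f i|) / 2 := by
  have h : ∀ i, (f i)⁺ = (|f i| + f i) / 2 := fun i => by
    rw [abs_add_eq_two_nsmul_posPart, nsmul_eq_mul]; ring
  simp only [h, ← sum_div, sum_add_distrib, hf, add_zero]

section ZeroSum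

variable {ι : Type*} [Fintype ι] {δ : ι → ℝ}

lemma sum_negPart_eq_sum_posPart (hδ : ∑ i, δ i = 0) : ∑ i, (δ i)⁻ = ∑ i, (δ i)⁺ := by
  have h := sum_sub_distrib (s := univ) (fun i => (δ i)⁺) (fun i => (δ i)⁻)
  simp only [posPart_sub_negPart, hδ] at h
  linarith

lemma sum_sum_posPart_mul_negPart_smul_sub {E : Type*} [AddCommGroup E] [Module ℝ E]
    (hδ : ∑ i, δ i = 0) (r : ι → E) :
    ∑ i, ∑ j, ((δ i)⁺ * (δ j)⁻) • (r i - r j) = (∑ i, (δ i)⁺) • ∑ i, δ i • r i := by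
  set β := ∑ i, (δ i)⁺
  have h1 : ∀ i, ∑ j, ((δ i)⁺ * (δ j)⁻) • r i = (β * (δ i)⁺) • r i := fun i => by
    rw [← sum_smul, ← mul_sum, sum_negPart_eq_sum_posPart hδ, mul_comm]
  have h2 : ∀ j, ∑ i, ((δ i)⁺ * (δ j)⁻) • r j = (β * (δ j)⁻) • r j := fun j => by
    rw [← sum_smul, ← sum_mul]
  calc ∑ i, ∑ j, ((δ i)⁺ * (δ j)⁻) • (r i - r j)
      = ∑ i, ∑ j, ((δ i)⁺ * (δ j)⁻) • r i - ∑ j, ∑ i, ((δ i)⁺ * (δ j)⁻) • r j := by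
        rw [sum_comm (f := fun j i => ((δ i)⁺ * (δ j)⁻) • r j)]
        simp only [smul_sub, sum_sub_distrib]
    _ = ∑ i, (β * (δ i)⁺) • r i - ∑ j, (β * (δ j)⁻) • r j := by simp only [h1, h2]
    _ = β • ∑ i, δ i • r i := by
        rw [← sum_sub_distrib, smul_sum]
        refine sum_congr rfl fun i _ => ?_
        rw [← sub_smul, ← mul_sub, posPart_sub_negPart, mul_smul]

lemma norm_sum_smul_le_of_sum_eq_zero {E : Type*} [SeminormedAddCommGroup E] [NormedSpace ℝ E]
    (hδ : ∑ i, δ i = 0) (r : ι → E) {D : ℝ} (hD : ∀ i j, ‖r i - r j‖ ≤ D) :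
    ‖∑ i, δ i • r i‖ ≤ (∑ i, |δ i|) / 2 * D := by
  have hβ := sum_posPart_eq_half_sum_abs univ hδ
  rcases (sum_nonneg fun i _ => abs_nonneg (δ i) : 0 ≤ ∑ i, |δ i|).eq_or_lt with habs | habs
  · have hδ0 : ∀ i, δ i = 0 := fun i => abs_eq_zero.1 <|
      (sum_eq_zero_iff_of_nonneg fun j _ => abs_nonneg (δ j)).1 habs.symm i (mem_univ i)
    simp [hδ0]
  rw [← hβ]
  set β := ∑ i, (δ i)⁺
  have hβpos : 0 < β := by linarith
  refine le_of_mul_le_mul_left ?_ hβpos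
  calc β * ‖∑ i, δ i • r i‖ = ‖∑ i, ∑ j, ((δ i)⁺ * (δ j)⁻) • (r i - r j)‖ := by
        rw [sum_sum_posPart_mul_negPart_smul_sub hδ, norm_smul, Real.norm_of_nonneg hβpos.le]
    _ ≤ ∑ i, ∑ j, (δ i)⁺ * (δ j)⁻ * D := by
        refine (norm_sum_le _ _).trans (sum_le_sum fun i _ => (norm_sum_le _ _).trans
          (sum_le_sum fun j _ => ?_))
        have hw : 0 ≤ (δ i)⁺ * (δ j)⁻ := mul_nonneg (posPart_nonneg _) (negPart_nonneg _)
        rw [norm_smul, Real.norm_of_nonneg hw]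
        exact mul_le_mul_of_nonneg_left (hD i j) hw
    _ = β * (β * D) := by
        simp only [← sum_mul, ← mul_sum, sum_negPart_eq_sum_posPart hδ, mul_assoc, β]

end ZeroSum

section Trajectories

variable {S : Type*} {p : Matrix S S ℝ}

lemma pathWeight_cons {m : ℕ} (a : S) (g : Fin (m + 1) → S) :
    pathWeight p (Fin.cons a g : Fin (m + 2) → S) = p a (g 0) * pathWeight p g := by
  simp only [pathWeight, Fin.prod_univ_succ, Fin.castSucc_zero, Fin.cons_zero, Fin.cons_succ,
    ← Fin.succ_castSucc]

lemma firstVisit_cons_iff {x y : S} {u : ℕ} (g : Fin (u + 1) → S) :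
    ((Fin.cons x g : Fin (u + 1 + 1) → S) (Fin.last (u + 1)) = y ∧
        ∀ i : Fin (u + 1 + 1), (i : ℕ) < u + 1 → (Fin.cons x g : Fin (u + 1 + 1) → S) i ≠ y) ↔
      x ≠ y ∧ g (Fin.last u) = y ∧ ∀ i : Fin (u + 1), (i : ℕ) < u → g i ≠ y := by
  simp only [Fin.forall_fin_succ, ← Fin.succ_last, Fin.cons_zero, Fin.cons_succ, Fin.val_zero,
    Fin.val_succ, add_lt_add_iff_right, Nat.succ_pos, forall_const]
  tauto

end Trajectories

section HittingTimes

variable {S : Type*} [Fintype S] {p : Matrix S S ℝ}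

lemma IsStochastic.mem_rowStochastic [DecidableEq S] (hp : IsStochastic p) :
    p ∈ rowStochastic ℝ S :=
  mem_rowStochastic_iff_sum.2 hp

lemma IsStochastic.pow [DecidableEq S] (hp : IsStochastic p) (k : ℕ) : IsStochastic (p ^ k) :=
  mem_rowStochastic_iff_sum.1 (pow_mem hp.mem_rowStochastic k)

lemma pathWeight_nonneg (hp : IsStochastic p) {m : ℕ} (z : Fin (m + 1) → S) :
    0 ≤ pathWeight p z :=
  prod_nonneg fun _ _ => hp.1 _ _

lemma eventProb_nonneg (hp : IsStochastic p) (x : S) (m : ℕ) (A : (Fin (m + 1) → S) → Prop) :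
    0 ≤ eventProb p x m A :=
  sum_nonneg fun z _ => by split_ifs <;> simp [pathWeight_nonneg hp z]

open scoped Classical in
lemma eventProb_zero (x : S) (A : (Fin 1 → S) → Prop) :
    eventProb p x 0 A = if A (fun _ => x) then 1 else 0 := by
  rw [eventProb, Fintype.sum_eq_single (fun _ => x)]
  · simp [pathWeight]
  · intro z hz
    rw [if_neg]
    rintro ⟨hz0, -⟩
    exact hz (funext fun i => by rw [Fin.fin_one_eq_zero i, hz0])

open scoped Classical in
lemma eventProb_succ (x : S) (m : ℕ) (A : (Fin (m + 2) → S) → Prop) :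
    eventProb p x (m + 1) A = ∑ w, p x w * eventProb p w m (fun g => A (Fin.cons x g)) := by
  have hcons : ∀ a (g : Fin (m + 1) → S), (Fin.consEquiv fun _ => S) (a, g) = Fin.cons a g :=
    fun _ _ => rfl
  rw [eventProb, ← (Fin.consEquiv fun _ => S).sum_comp, Fintype.sum_prod_type,
    Fintype.sum_eq_single x fun a ha => sum_eq_zero fun g _ => if_neg (ha ·.1)]
  simp only [eventProb, mul_sum, hcons, pathWeight_cons]
  rw [sum_comm]
  refine sum_congr rfl fun g _ => ?_
  simp [ite_and]

lemma hitProbEq_self_zero (y : S) : hitProbEq p y y 0 = 1 := by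
  simp [hitProbEq, eventProb_zero]

lemma hitProbEq_zero_of_ne {x y : S} (hxy : x ≠ y) : hitProbEq p x y 0 = 0 := by
  simp [hitProbEq, eventProb_zero, hxy]

lemma hitProbEq_self_succ (y : S) (u : ℕ) : hitProbEq p y y (u + 1) = 0 := by
  rw [hitProbEq, eventProb_succ]
  simp only [firstVisit_cons_iff]
  simp [eventProb]

lemma hitProbEq_succ_of_ne {x y : S} (hxy : x ≠ y) (u : ℕ) :
    hitProbEq p x y (u + 1) = ∑ w, p x w * hitProbEq p w y u := by
  simp only [hitProbEq, eventProb_succ, firstVisit_cons_iff, hxy, ne_eq, not_false_eq_true,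
    true_and]

lemma hitProbEq_nonneg (hp : IsStochastic p) (x y : S) (u : ℕ) : 0 ≤ hitProbEq p x y u :=
  eventProb_nonneg hp x u _

lemma hitProbEq_succ_le (hp : IsStochastic p) (x y : S) (u : ℕ) :
    hitProbEq p x y (u + 1) ≤ ∑ w, p x w * hitProbEq p w y u := by
  rcases eq_or_ne x y with rfl | hxy
  · rw [hitProbEq_self_succ]
    exact sum_nonneg fun w _ => mul_nonneg (hp.1 x w) (hitProbEq_nonneg hp w x u)
  · rw [hitProbEq_succ_of_ne hxy]

lemma sum_range_hitProbEq_le_one (hp : IsStochastic p) (y : S) (m : ℕ) :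
    ∀ x, ∑ u ∈ range m, hitProbEq p x y u ≤ 1 := by
  induction m with
  | zero => simp
  | succ m ih =>
    intro x
    rw [sum_range_succ']
    rcases eq_or_ne x y with rfl | hxy
    · simp [hitProbEq_self_succ, hitProbEq_self_zero]
    · calc ∑ u ∈ range m, hitProbEq p x y (u + 1) + hitProbEq p x y 0
          = ∑ w, p x w * ∑ u ∈ range m, hitProbEq p w y u := by
            simp only [hitProbEq_succ_of_ne hxy, hitProbEq_zero_of_ne hxy, mul_sum, add_zero]
            exact sum_comm
        _ ≤ ∑ w, p x w * 1 := sum_le_sum fun w _ => mul_le_mul_of_nonneg_left (ih w) (hp.1 x w)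
        _ = 1 := by simp only [mul_one, hp.2 x]

variable [DecidableEq S]

lemma hitProbEq_add_le_mulVec (hp : IsStochastic p) (y : S) (m : ℕ) :
    ∀ (s : ℕ) (x : S), hitProbEq p x y (s + m) ≤ (p ^ s *ᵥ fun z => hitProbEq p z y m) x
  | 0, x => by simp
  | s + 1, x => by
    rw [pow_succ', ← mulVec_mulVec, Nat.add_right_comm]
    exact (hitProbEq_succ_le hp x y (s + m)).trans <|
      sum_le_sum fun w _ => mul_le_mul_of_nonneg_left (hitProbEq_add_le_mulVec hp y m s w) (hp.1 x w)

lemma natCast_mul_dotProduct_hitProbEq_le (hp : IsStochastic p) {μ ν : S → ℝ} (hμ : 0 ≤ μ)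
    (hν : 0 ≤ ν) (hμν : ∀ k, μ ᵥ* p ^ k ≤ ν) (y : S) (m : ℕ) :
    m * (μ ⬝ᵥ fun z => hitProbEq p z y m) ≤ ∑ z, ν z := by
  set h : ℕ → S → ℝ := fun u z => hitProbEq p z y u
  have h_nonneg : ∀ u, 0 ≤ h u := fun u z => hitProbEq_nonneg hp z y u
  have h_le : ∀ v ≤ m, μ ⬝ᵥ h m ≤ ν ⬝ᵥ h v := fun v hv =>
    calc μ ⬝ᵥ h m ≤ μ ⬝ᵥ (p ^ (m - v) *ᵥ h v) :=
          dotProduct_le_dotProduct_of_nonneg_left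
            (fun x => by simpa [h, Nat.sub_add_cancel hv] using
              hitProbEq_add_le_mulVec hp y v (m - v) x) hμ
      _ = (μ ᵥ* p ^ (m - v)) ⬝ᵥ h v := dotProduct_mulVec _ _ _
      _ ≤ ν ⬝ᵥ h v := dotProduct_le_dotProduct_of_nonneg_right (hμν _) (h_nonneg v)
  calc m * (μ ⬝ᵥ h m) = ∑ v ∈ range m, μ ⬝ᵥ h m := by simp
    _ ≤ ∑ v ∈ range m, ν ⬝ᵥ h (v + 1) :=
        sum_le_sum fun v hv => h_le _ (mem_range.1 hv)
    _ ≤ ∑ v ∈ range (m + 1), ν ⬝ᵥ h v := by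
        rw [sum_range_succ']
        exact le_add_of_nonneg_right (dotProduct_nonneg_of_nonneg hν (h_nonneg 0))
    _ = ν ⬝ᵥ fun z => ∑ v ∈ range (m + 1), h v z := by
        rw [← dotProduct_sum]; congr 1; ext z; simp
    _ ≤ ν ⬝ᵥ 1 := dotProduct_le_dotProduct_of_nonneg_left
        (fun z => sum_range_hitProbEq_le_one hp y (m + 1) z) hν
    _ = ∑ z, ν z := dotProduct_one ν

lemma hitProbEq_le_card_div (hp : IsStochastic p) (x y : S) {m : ℕ} (hm : 0 < m) :
    hitProbEq p x y m ≤ Fintype.card S / m := by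
  rw [le_div_iff₀' (by exact_mod_cast hm)]
  simpa using natCast_mul_dotProduct_hitProbEq_le hp (μ := Pi.single x 1) (ν := 1)
    (by simp [Pi.single_nonneg]) zero_le_one
    (fun k z => by simpa using le_one_of_mem_rowStochastic (pow_mem hp.mem_rowStochastic k))
    y m

end HittingTimes

section Stationary

variable {S : Type*} [Fintype S] [DecidableEq S] {p : Matrix S S ℝ} {π : S → ℝ}

lemma IsStationaryDistr.vecMul_pow (hst : IsStationaryDistr p π) : ∀ k : ℕ, π ᵥ* p ^ k = π
  | 0 => by simp
  | k + 1 => by rw [pow_succ, ← vecMul_vecMul, hst.vecMul_pow k]; exact funext hst.2.2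

lemma sum_sub_stationary_eq_zero (hp : IsStochastic p) (hst : IsStationaryDistr p π) (x : S)
    (s : ℕ) : ∑ z, ((p ^ s) x z - π z) = 0 := by
  rw [sum_sub_distrib, (hp.pow s).2 x, hst.2.1, sub_self]

lemma dotProduct_hitProbEq_le_one_div (hp : IsStochastic p) (hst : IsStationaryDistr p π) (y : S)
    {m : ℕ} (hm : 0 < m) : (π ⬝ᵥ fun z => hitProbEq p z y m) ≤ 1 / m := by
  rw [le_div_iff₀' (by exact_mod_cast hm), ← hst.2.1]
  exact natCast_mul_dotProduct_hitProbEq_le hp hst.1 hst.1 (fun k => (hst.vecMul_pow k).le) y m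

lemma hitProbEq_add_le_tvDist_mul_add (hp : IsStochastic p) (hst : IsStationaryDistr p π)
    (x y : S) (s : ℕ) {m : ℕ} (hm : 0 < m) {B : ℝ} (hB : ∀ z, hitProbEq p z y m ≤ B) :
    hitProbEq p x y (s + m) ≤ tvDist p π x s * B + 1 / m := by
  set h : S → ℝ := fun z => hitProbEq p z y m
  set δ : S → ℝ := fun z => (p ^ s) x z - π z
  have hδ : ∑ z, (δ z)⁺ = tvDist p π x s := by
    rw [sum_posPart_eq_half_sum_abs _ (sum_sub_stationary_eq_zero hp hst x s), tvDist]; ring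
  calc hitProbEq p x y (s + m) ≤ (p ^ s *ᵥ h) x := hitProbEq_add_le_mulVec hp y m s x
    _ = ∑ z, δ z * h z + π ⬝ᵥ h := by
        simp only [mulVec, dotProduct, δ, ← sum_add_distrib, sub_mul, sub_add_cancel]
    _ ≤ ∑ z, (δ z)⁺ * B + 1 / m := by
        refine add_le_add (sum_le_sum fun z _ => ?_) (dotProduct_hitProbEq_le_one_div hp hst y hm)
        exact (mul_le_mul_of_nonneg_right (le_posPart _) (hitProbEq_nonneg hp z y m)).trans
          (mul_le_mul_of_nonneg_left (hB z) (posPart_nonneg _))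
    _ = tvDist p π x s * B + 1 / m := by rw [← sum_mul, hδ]

end Stationary

section Mixing

variable {S : Type*} [Fintype S]

noncomputable def rowTVDist (M : Matrix S S ℝ) (a b : S) : ℝ :=
  (1 / 2) * ∑ w, |M a w - M b w|

lemma norm_toLp_one_eq_sum_abs (f : S → ℝ) : ‖WithLp.toLp 1 f‖ = ∑ w, |f w| := by
  simp [PiLp.norm_eq_of_L1]

lemma rowTVDist_eq_norm (M : Matrix S S ℝ) (a b : S) :
    rowTVDist M a b = ‖WithLp.toLp 1 (M a - M b)‖ / 2 := by
  rw [norm_toLp_one_eq_sum_abs, rowTVDist]; simp only [Pi.sub_apply]; ring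

lemma tvDist_eq_norm [DecidableEq S] (p : Matrix S S ℝ) (π : S → ℝ) (x : S) (t : ℕ) :
    tvDist p π x t = ‖WithLp.toLp 1 ((p ^ t) x - π)‖ / 2 := by
  rw [norm_toLp_one_eq_sum_abs, tvDist]; simp only [Pi.sub_apply]; ring

lemma rowTVDist_le_one {M : Matrix S S ℝ} (hM : IsStochastic M) (a b : S) :
    rowTVDist M a b ≤ 1 := by
  have h : ∀ w, |M a w - M b w| ≤ M a w + M b w := fun w =>
    abs_sub_le_iff.2 ⟨by linarith [hM.1 b w], by linarith [hM.1 a w]⟩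
  have := sum_le_sum fun w (_ : w ∈ univ) => h w
  rw [sum_add_distrib, hM.2 a, hM.2 b] at this
  rw [rowTVDist]; linarith

lemma rowTVDist_mul_le {M N : Matrix S S ℝ} {a b : S} (hM : ∑ w, M a w = ∑ w, M b w) {D : ℝ}
    (hN : ∀ u v, rowTVDist N u v ≤ D) : rowTVDist (M * N) a b ≤ rowTVDist M a b * D := by
  have hrow : ∑ v, (M a v - M b v) • WithLp.toLp 1 (N v) =
      WithLp.toLp 1 ((M * N) a - (M * N) b) := by
    ext w
    simp [mul_apply, sum_sub_distrib, sub_mul]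
  have h := norm_sum_smul_le_of_sum_eq_zero (δ := fun v => M a v - M b v)
    (by rw [sum_sub_distrib, hM, sub_self]) (fun v => WithLp.toLp 1 (N v)) (D := 2 * D)
    fun u v => by rw [← WithLp.toLp_sub]; linarith [hN u v, rowTVDist_eq_norm N u v]
  rw [hrow] at h
  rw [rowTVDist_eq_norm, rowTVDist]
  linarith

variable [DecidableEq S] {p : Matrix S S ℝ} {π : S → ℝ}

lemma rowTVDist_pow_le_tvDist_add (p : Matrix S S ℝ) (π : S → ℝ) (t : ℕ) (a b : S) :
    rowTVDist (p ^ t) a b ≤ tvDist p π a t + tvDist p π b t := by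
  rw [rowTVDist_eq_norm, tvDist_eq_norm, tvDist_eq_norm, ← add_div]
  gcongr
  simpa [dist_eq_norm, ← WithLp.toLp_sub] using dist_triangle_right
    (WithLp.toLp 1 ((p ^ t) a)) (WithLp.toLp 1 ((p ^ t) b)) (WithLp.toLp 1 π)

lemma tvDist_le_of_rowTVDist_le (hst : IsStationaryDistr p π) {t : ℕ} {x : S} {D : ℝ}
    (hD : ∀ z, rowTVDist (p ^ t) x z ≤ D) : tvDist p π x t ≤ D := by
  have hrow :
      WithLp.toLp 1 ((p ^ t) x - π) = ∑ z, π z • WithLp.toLp 1 ((p ^ t) x - (p ^ t) z) := by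
    ext w
    have hπ := congrFun (hst.vecMul_pow t) w
    simp only [vecMul, dotProduct] at hπ
    simp [mul_sub, sum_sub_distrib, ← sum_mul, hst.2.1, hπ]
  rw [tvDist_eq_norm, hrow]
  calc ‖∑ z, π z • WithLp.toLp 1 ((p ^ t) x - (p ^ t) z)‖ / 2
      ≤ (∑ z, π z * ‖WithLp.toLp 1 ((p ^ t) x - (p ^ t) z)‖) / 2 := by
        gcongr
        refine (norm_sum_le _ _).trans_eq (sum_congr rfl fun z _ => ?_)
        rw [norm_smul, Real.norm_of_nonneg (hst.1 z)]
    _ = ∑ z, π z * rowTVDist (p ^ t) x z := by simp only [rowTVDist_eq_norm, sum_div, mul_div_assoc]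
    _ ≤ ∑ z, π z * D := sum_le_sum fun z _ => mul_le_mul_of_nonneg_left (hD z) (hst.1 z)
    _ = D := by rw [← sum_mul, hst.2.1, one_mul]

lemma rowTVDist_pow_mul_le (hp : IsStochastic p) {T : ℕ}
    (hT : ∀ a b, rowTVDist (p ^ T) a b ≤ 1 / 2) :
    ∀ k a b, rowTVDist (p ^ (T * k)) a b ≤ (1 / 2) ^ k
  | 0, a, b => by simpa using rowTVDist_le_one (hp.pow 0) a b
  | k + 1, a, b => by
    rw [Nat.mul_succ, pow_add, pow_succ]
    exact (rowTVDist_mul_le (by rw [(hp.pow _).2 a, (hp.pow _).2 b]) hT).trans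
      (mul_le_mul_of_nonneg_right (rowTVDist_pow_mul_le hp hT k a b) (by norm_num))

lemma tvDist_mul_le_half_pow (hp : IsStochastic p) (hst : IsStationaryDistr p π) {T : ℕ}
    (hT : ∀ z, tvDist p π z T ≤ 1 / 4) (x : S) (k : ℕ) : tvDist p π x (T * k) ≤ (1 / 2) ^ k :=
  tvDist_le_of_rowTVDist_le hst fun z => rowTVDist_pow_mul_le hp
    (fun a b => (rowTVDist_pow_le_tvDist_add p π T a b).trans (by linarith [hT a, hT b])) k x z

end Mixing

/-- Proposition 6: if `P_z(τ(y) = u) ≤ ψ(u)` for all states `z, y` and `u > 0`, then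
`P_x(τ(y) = t) ≤ d_x(s) ψ(t - s) + 1/(t - s)` for `0 < s < t`; moreover, whenever the
mixing time `t_mix(1/4)` exists and `t > 2 t_mix(1/4) ⌈log₂ n⌉`, `P_x(τ(y) = t) ≤ 4/t`. -/
theorem mixing_time_surprise_bound {S : Type*} [Fintype S] [DecidableEq S]
    (p : Matrix S S ℝ) (π : S → ℝ) (hp : IsStochastic p) (hstat : IsStationaryDistr p π)
    (ψ : ℕ → ℝ) (hψ : ∀ (z y : S) (u : ℕ), 0 < u → hitProbEq p z y u ≤ ψ u)
    (x y : S) :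
    (∀ s t : ℕ, 0 < s → s < t →
        hitProbEq p x y t ≤ tvDist p π x s * ψ (t - s) + 1 / ((t - s : ℕ) : ℝ)) ∧
      ((∃ T : ℕ, ∀ z : S, tvDist p π z T ≤ 1 / 4) →
        ∀ t : ℕ,
          2 * sInf {T : ℕ | ∀ z : S, tvDist p π z T ≤ 1 / 4} *
              Nat.clog 2 (Fintype.card S) < t →
            hitProbEq p x y t ≤ 4 / t) := by
  refine ⟨fun s t _ hst => ?_, fun hmix t ht => ?_⟩
  · have hm : 0 < t - s := Nat.sub_pos_of_lt hst
    simpa [Nat.add_sub_cancel' hst.le] using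
      hitProbEq_add_le_tvDist_mul_add hp hstat x y s hm fun z => hψ z y _ hm
  set n := Fintype.card S
  set s := sInf {T : ℕ | ∀ z : S, tvDist p π z T ≤ 1 / 4} * Nat.clog 2 n with hs
  have hst : 2 * s < t := by rwa [hs, ← mul_assoc]
  have hm : 0 < t - s := by omega
  have hn : (0 : ℝ) < n := by exact_mod_cast Fintype.card_pos_iff.2 ⟨x⟩
  have htv : tvDist p π x s ≤ 1 / n := by
    refine (tvDist_mul_le_half_pow hp hstat (Nat.sInf_mem hmix) x _).trans ?_
    rw [_root_.one_div_pow]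
    exact one_div_le_one_div_of_le hn (by exact_mod_cast Nat.le_pow_clog one_lt_two n)
  have hhit := hitProbEq_add_le_tvDist_mul_add hp hstat x y s hm
    fun z => hitProbEq_le_card_div hp z y hm
  rw [Nat.add_sub_cancel' (by omega)] at hhit
  have hm' : (0 : ℝ) < (t - s : ℕ) := by exact_mod_cast hm
  calc hitProbEq p x y t ≤ 1 / n * (n / (t - s : ℕ)) + 1 / (t - s : ℕ) :=
        hhit.trans (by gcongr)
    _ = 2 / (t - s : ℕ) := by field_simp; ring
    _ ≤ 4 / t := by
        rw [div_le_div_iff₀ hm' (by exact_mod_cast (by omega : 0 < t))]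
        have : (t : ℝ) ≤ 2 * (t - s : ℕ) := by exact_mod_cast (by omega : t ≤ 2 * (t - s))
        linarith
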